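/- arXiv:2512.08020 — 3 statements merged into one kernel-verified Lean document; each statement's English description precedes it below -/
import Mathlib

section
/- For all real numbers r ≥ 13 and α with 1.314 ≤ α ≤ 1.648: 5·((r−1)·α·r + (α·r − r)·(2r − α·r) − 2)/2 · (rα−2)(rα−3)/((15−2)(15−3)) − 203·rα·(rα−1)(rα−2)(rα−3)/(9·15·(15−1)·(15−3)) ≥ r(r−1)(r−2)(r−3)/64. -/
/-! Writing `r = 13 + s`, the difference of the two sides is a quartic in `s` whose coefficients
(its Taylor coefficients at `r = 13`) are quartics in `α`. Each of them is nonnegative on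
`[1.314, 1.648]`, certified by products of `α - 1.314` and `1.648 - α`, so the difference is
nonnegative for `s ≥ 0`. -/

open Finset

noncomputable def coeffAt13 : ℕ → ℝ → ℝ
  | 0, α => -31285/104 + 56513/135*α - 2663843/1620*α^2 + 1128413/540*α^3 - 577811/810*α^4
  | 1, α => -3173/32 + 320701/3510*α - 362861/810*α^2 + 112151/180*α^3 - 88894/405*α^4
  | 2, α => -10443/832 + 345/52*α - 475393/10530*α^2 + 12527/180*α^3 - 3419/135*α^4
  | 3, α => -23/32 + 25/156*α - 155/78*α^2 + 24227/7020*α^3 - 526/405*α^4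
  | 4, α => -1/64 - 5/156*α^2 + 5/78*α^3 - 263/10530*α^4
  | _, _ => 0

lemma coeffAt13_nonneg {α : ℝ} (h1 : 1.314 ≤ α) (h2 : α ≤ 1.648) (i : ℕ) :
    0 ≤ coeffAt13 i α := by
  have hu : 0 ≤ α - 1.314 := by linarith
  have hv : 0 ≤ 1.648 - α := by linarith
  have huv := mul_nonneg hu hv
  match i with
  | 0 | 1 | 2 | 3 | 4 =>
    simp only [coeffAt13]
    nlinarith [mul_nonneg huv huv, mul_nonneg (mul_nonneg huv hu) hu,
      mul_nonneg (mul_nonneg huv hv) hv, sq_nonneg (α - 1.5)]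
  | _ + 5 => simp only [coeffAt13, le_refl]

lemma sides_sub_eq_sum_coeffAt13 (r α : ℝ) :
    5*((r-1)*α*r + (α*r - r)*(2*r - α*r) - 2)/2 * ((r*α-2)*(r*α-3)/((15-2)*(15-3)))
      - 203*(r*α)*(r*α-1)*(r*α-2)*(r*α-3)/(9*15*(15-1)*(15-3))
      - r*(r-1)*(r-2)*(r-3)/64
      = ∑ i ∈ range 5, coeffAt13 i α * (r - 13) ^ i := by
  simp only [sum_range_succ, sum_range_zero, coeffAt13]
  ring

theorem stmt_14 (r α : ℝ) (hr : 13 ≤ r) (h1 : 1.314 ≤ α) (h2 : α ≤ 1.648) :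
    5*((r-1)*α*r + (α*r - r)*(2*r - α*r) - 2)/2 * ((r*α-2)*(r*α-3)/((15-2)*(15-3)))
      - 203*(r*α)*(r*α-1)*(r*α-2)*(r*α-3)/(9*15*(15-1)*(15-3))
      ≥ r*(r-1)*(r-2)*(r-3)/64 := by
  rw [ge_iff_le, ← sub_nonneg, sides_sub_eq_sum_coeffAt13]
  exact sum_nonneg fun i _ =>
    mul_nonneg (coeffAt13_nonneg h1 h2 i) (pow_nonneg (sub_nonneg.mpr hr) i)
end

section
/- For all real numbers r ≥ 13 and α with 1.2274 ≤ α ≤ 1.435: 5·((r−1)·α·r + (α·r − r)·(2r − α·r) − 2)/2 · (rα−2)(rα−3)/((12−2)(12−3)) − 203·rα·(rα−1)(rα−2)(rα−3)/(9·12·(12−1)·(12−3)) ≥ r(r−1)(r−2)(r−3)/64. -/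
/-!
As a polynomial in `r`, the difference of the two sides equals
`r² · (c₄(α) r² + c₃(α) r + c₂(α)) + (3/32 + 401/1782 α) r - 1/3`.
On the `α`-interval both `c₄` and `c₃` are nonnegative, so the quadratic factor is increasing
for `r ≥ 0` and it suffices to check it at `r = 13`. The leading coefficient `c₄` has a root just
below `1.2274`, which is where the lower bound on `α` comes from.
-/

lemma quadratic_le_quadratic {a b c r₀ r : ℝ} (ha : 0 ≤ a) (hb : 0 ≤ b) (hr₀ : 0 ≤ r₀) (hr : r₀ ≤ r) :
    a*r₀^2 + b*r₀ + c ≤ a*r^2 + b*r + c := by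
  gcongr

namespace Inequality31

noncomputable def c₄ (α : ℝ) : ℝ := -125/2673*α^4 + α^3/9 - α^2/18 - 1/64

noncomputable def c₃ (α : ℝ) : ℝ := 3/32 + 5/18*α - 5/9*α^2 + 401/1782*α^3

noncomputable def c₂ (α : ℝ) : ℝ := -97/192 + 2/3*α - 71/243*α^2

lemma sub_eq (r α : ℝ) :
    5*((r-1)*α*r + (α*r - r)*(2*r - α*r) - 2)/2 * ((r*α-2)*(r*α-3)/((12-2)*(12-3)))
      - 203*(r*α)*(r*α-1)*(r*α-2)*(r*α-3)/(9*12*(12-1)*(12-3))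
      - r*(r-1)*(r-2)*(r-3)/64
      = r^2 * (c₄ α * r^2 + c₃ α * r + c₂ α) + (3/32 + 401/1782*α)*r - 1/3 := by
  unfold c₄ c₃ c₂
  ring

section

variable {α : ℝ}

lemma c₄_nonneg (h1 : 1.2274 ≤ α) (h2 : α ≤ 1.435) :
    0 ≤ c₄ α := by
  have hα := mul_nonneg (sub_nonneg.2 h1) (sub_nonneg.2 h2)
  unfold c₄
  nlinarith [mul_nonneg hα (sq_nonneg (α + 0.1433)), sq_nonneg (α - 1.33)]

lemma c₃_nonneg (h1 : 1.2274 ≤ α) (h2 : α ≤ 1.435) :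
    0 ≤ c₃ α := by
  have hα := mul_nonneg (sub_nonneg.2 h1) (sub_nonneg.2 h2)
  unfold c₃
  nlinarith [mul_nonneg hα (sub_nonneg.2 h1), sq_nonneg (α - 1.3)]

lemma quadratic_at_thirteen_nonneg (h1 : 1.2274 ≤ α) (h2 : α ≤ 1.435) :
    0 ≤ c₄ α * 13^2 + c₃ α * 13 + c₂ α := by
  have hα := mul_nonneg (sub_nonneg.2 h1) (sub_nonneg.2 h2)
  unfold c₄ c₃ c₂
  nlinarith [mul_nonneg hα (sq_nonneg (α + 0.1433)), sq_nonneg (α - 1.33),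
    mul_nonneg hα (sub_nonneg.2 h1), mul_nonneg hα (sub_nonneg.2 h2)]

end

end Inequality31

theorem stmt_15 (r α : ℝ) (hr : 13 ≤ r) (h1 : 1.2274 ≤ α) (h2 : α ≤ 1.435) :
    5*((r-1)*α*r + (α*r - r)*(2*r - α*r) - 2)/2 * ((r*α-2)*(r*α-3)/((12-2)*(12-3)))
      - 203*(r*α)*(r*α-1)*(r*α-2)*(r*α-3)/(9*12*(12-1)*(12-3))
      ≥ r*(r-1)*(r-2)*(r-3)/64 := by
  have hq : 0 ≤ Inequality31.c₄ α * r^2 + Inequality31.c₃ α * r + Inequality31.c₂ α :=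
    (Inequality31.quadratic_at_thirteen_nonneg h1 h2).trans
      (quadratic_le_quadratic (Inequality31.c₄_nonneg h1 h2)
        (Inequality31.c₃_nonneg h1 h2) (by norm_num) hr)
  rw [ge_iff_le, ← sub_nonneg, Inequality31.sub_eq]
  nlinarith [mul_nonneg (sq_nonneg r) hq, mul_nonneg (sub_nonneg.2 hr) (sub_nonneg.2 h1)]
end

section
/- The function f(α) = (α−1)³/(α⁴·(α+2)) is monotonically increasing on the interval (1, 1.23]. -/
/-!
Logarithmic differentiation gives
`f'(α) = (α - 1)² (8 + 3α - 2α²) / (α⁵ (α + 2)²)`, which is positive for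
`1 < α < (3 + √73) / 4 ≈ 2.89`. Hence `f` is strictly increasing on `[1, (3 + √73) / 4]`,
an interval containing `(1, 1.23]`.
-/

open Set Real

lemma hasDerivAt_sub_one_pow_three_div (α : ℝ) (h₀ : α ≠ 0) (h₂ : α + 2 ≠ 0) :
    HasDerivAt (fun α : ℝ => (α - 1)^3 / (α^4 * (α + 2)))
      ((α - 1)^2 * (8 + 3 * α - 2 * α^2) / (α^5 * (α + 2)^2)) α := by
  have hid : HasDerivAt (fun x : ℝ => x) 1 α := hasDerivAt_id' α
  have hnum := (hid.sub_const 1).fun_pow 3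
  have hden := (hid.fun_pow 4).fun_mul (hid.add_const 2)
  refine (hnum.fun_div hden (mul_ne_zero (pow_ne_zero 4 h₀) h₂)).congr_deriv ?_
  push_cast
  field_simp
  ring

lemma eight_add_three_mul_sub_two_mul_sq_pos {x : ℝ} (h₁ : (3 - √73) / 4 < x)
    (h₂ : x < (3 + √73) / 4) : 0 < 8 + 3 * x - 2 * x^2 := by
  have hsq : √73 ^ 2 = 73 := sq_sqrt (by norm_num)
  nlinarith [mul_pos (sub_pos.2 h₁) (sub_pos.2 h₂)]

theorem strictMonoOn_sub_one_pow_three_div :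
    StrictMonoOn (fun α : ℝ => (α - 1)^3 / (α^4 * (α + 2))) (Icc 1 ((3 + √73) / 4)) := by
  have hderiv : ∀ α ∈ Icc (1 : ℝ) ((3 + √73) / 4), HasDerivAt
      (fun α : ℝ => (α - 1)^3 / (α^4 * (α + 2)))
      ((α - 1)^2 * (8 + 3 * α - 2 * α^2) / (α^5 * (α + 2)^2)) α :=
    fun α hα => hasDerivAt_sub_one_pow_three_div α (by linarith [hα.1]) (by linarith [hα.1])
  refine strictMonoOn_of_deriv_pos (convex_Icc _ _)
    (fun α hα => (hderiv α hα).continuousAt.continuousWithinAt) fun α hα => ?_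
  rw [interior_Icc] at hα
  obtain ⟨h₁, h₂⟩ := hα
  rw [(hderiv α (Ioo_subset_Icc_self ⟨h₁, h₂⟩)).deriv]
  have hquad := eight_add_three_mul_sub_two_mul_sq_pos (by linarith [sqrt_nonneg 73]) h₂
  have : 0 < α - 1 := sub_pos.2 h₁
  positivity

theorem stmt_18 :
    StrictMonoOn (fun α : ℝ => (α-1)^3 / (α^4 * (α+2))) (Set.Ioc 1 1.23) := by
  refine strictMonoOn_sub_one_pow_three_div.mono (Ioc_subset_Icc_self.trans ?_)
  refine Icc_subset_Icc_right ?_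
  have : (2 : ℝ) ≤ √73 := le_sqrt_of_sq_le (by norm_num)
  norm_num
  linarith
end
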